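/- arXiv:2203.01471 — 4 statements merged into one kernel-verified Lean document; each statement's English description precedes it below -/
import Mathlib

section
/- Suppose each of p observed variables is assigned a nonempty parent set Π_i ⊆ [d] and each k ∈ [d] has nonempty child set ch(L_k) = {i : k ∈ Π_i}. Define the graph G on [p] with edge set E₀ = {(i,j) : i ≠ j, Π_i ∩ Π_j ≠ ∅}. If for every k ∈ [d] there exists a unique child, i.e., ch(L_k) \ ⋃_{j ≠ k} ch(L_j) ≠ ∅, then the family {ch(L_k) : k ∈ [d]} is exactly the set of independent maximal cliques of G. -/
/-!
A unique child `u` of `L_k` has `Π_u = {k}`, so every neighbour of `u` in `G` is a child of `L_k`.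
Hence every clique through `u` lies inside `ch(L_k)`: this makes `ch(L_k)` a maximal clique, and
the only maximal clique containing `u`, so it is independent. Conversely, the sets `ch(L_k)` are
maximal cliques covering all vertices (every `Π_i` is nonempty), and an independent maximal clique
has a vertex covered by no other maximal clique, so it must be one of them.
-/

/-- A maximal clique: a clique not properly contained in any other clique. -/
def IsMaxClique {V : Type*} (G : SimpleGraph V) (s : Set V) : Prop :=
  G.IsClique s ∧ ∀ t : Set V, G.IsClique t → s ⊆ t → s = t

/-- An independent maximal clique: a maximal clique not contained in the
union of the other maximal cliques. -/
def IsIndepMaxClique {V : Type*} (G : SimpleGraph V) (s : Set V) : Prop :=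
  IsMaxClique G s ∧ ¬ s ⊆ ⋃₀ {t : Set V | IsMaxClique G t ∧ t ≠ s}

theorem isMaxClique_of_forall_isClique_subset {V : Type*} {G : SimpleGraph V} {s : Set V} {u : V}
    (hs : G.IsClique s) (hu : u ∈ s) (h : ∀ t, G.IsClique t → u ∈ t → t ⊆ s) :
    IsMaxClique G s :=
  ⟨hs, fun t ht hst => (h t ht (hst hu)).antisymm' hst⟩

theorem isIndepMaxClique_of_forall_isClique_subset {V : Type*} {G : SimpleGraph V} {s : Set V}
    {u : V} (hs : G.IsClique s) (hu : u ∈ s) (h : ∀ t, G.IsClique t → u ∈ t → t ⊆ s) :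
    IsIndepMaxClique G s := by
  refine ⟨isMaxClique_of_forall_isClique_subset hs hu h, fun hcov => ?_⟩
  obtain ⟨t, ⟨ht, hts⟩, hut⟩ := hcov hu
  exact hts (ht.2 s hs (h t ht.1 hut))

theorem IsIndepMaxClique.mem_of_forall_mem {V : Type*} {G : SimpleGraph V} {S : Set V}
    {F : Set (Set V)} (hF : ∀ s ∈ F, IsMaxClique G s) (hcover : ∀ v, ∃ s ∈ F, v ∈ s)
    (hS : IsIndepMaxClique G S) : S ∈ F := by
  obtain ⟨v, -, hvU⟩ := Set.not_subset.mp hS.2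
  obtain ⟨s, hsF, hvs⟩ := hcover v
  by_contra hSF
  exact hvU (Set.mem_sUnion.mpr ⟨s, ⟨hF s hsF, fun h => hSF (h ▸ hsF)⟩, hvs⟩)

theorem eq_singleton_of_mem_diff_iUnion {ι κ : Type*} {Pa : ι → Finset κ} {k : κ} {u : ι}
    (hu : u ∈ {i | k ∈ Pa i} \ ⋃ j ∈ {j | j ≠ k}, {i | j ∈ Pa i}) : Pa u = {k} := by
  simp only [Set.mem_sdiff, Set.mem_ofPred_eq, Set.mem_iUnion, not_exists] at hu
  exact Finset.eq_singleton_iff_unique_mem.mpr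
    ⟨hu.1, fun j hj => by_contra fun hjk => hu.2 j hjk hj⟩

section Children

variable {ι κ : Type*} [DecidableEq κ] {Pa : ι → Finset κ} {G : SimpleGraph ι}
  (hG : ∀ i j, G.Adj i j ↔ i ≠ j ∧ (Pa i ∩ Pa j).Nonempty)
include hG

theorem isClique_setOf_mem (k : κ) : G.IsClique {i | k ∈ Pa i} :=
  fun i hi j hj hij => (hG i j).mpr ⟨hij, k, Finset.mem_inter.mpr ⟨hi, hj⟩⟩

theorem subset_setOf_mem_of_eq_singleton {k : κ} {u : ι} (hu : Pa u = {k}) {t : Set ι}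
    (ht : G.IsClique t) (hut : u ∈ t) : t ⊆ {i | k ∈ Pa i} := by
  intro v hv
  rcases eq_or_ne u v with rfl | huv
  · simp [hu]
  · obtain ⟨-, j, hj⟩ := (hG u v).mp (ht hut hv huv)
    obtain ⟨hju, hjv⟩ := Finset.mem_inter.mp hj
    rw [hu, Finset.mem_singleton] at hju
    exact hju ▸ hjv

theorem isIndepMaxClique_setOf_mem_of_eq_singleton {k : κ} {u : ι} (hu : Pa u = {k}) :
    IsIndepMaxClique G {i | k ∈ Pa i} :=
  isIndepMaxClique_of_forall_isClique_subset (isClique_setOf_mem hG k) (by simp [hu])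
    fun _ ht hut => subset_setOf_mem_of_eq_singleton hG hu ht hut

end Children

theorem stmt_2_general (p d : ℕ) (Pa : Fin p → Finset (Fin d))
    (hPa : ∀ i, (Pa i).Nonempty)
    (G : SimpleGraph (Fin p))
    (hG : ∀ i j : Fin p, G.Adj i j ↔ i ≠ j ∧ (Pa i ∩ Pa j).Nonempty)
    (hucc : ∀ k : Fin d,
      ({i : Fin p | k ∈ Pa i} \ ⋃ j ∈ {j : Fin d | j ≠ k}, {i : Fin p | j ∈ Pa i}).Nonempty) :
    {S : Set (Fin p) | ∃ k : Fin d, S = {i : Fin p | k ∈ Pa i}} =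
      {S : Set (Fin p) | IsIndepMaxClique G S} := by
  have hindep (k : Fin d) : IsIndepMaxClique G {i | k ∈ Pa i} :=
    have ⟨_, hu⟩ := hucc k
    isIndepMaxClique_setOf_mem_of_eq_singleton hG (eq_singleton_of_mem_diff_iUnion hu)
  ext S
  refine ⟨fun ⟨k, hS⟩ => hS ▸ hindep k, fun hS => hS.mem_of_forall_mem ?_ ?_⟩
  · rintro _ ⟨k, rfl⟩
    exact (hindep k).1
  · intro v
    obtain ⟨k, hk⟩ := hPa v
    exact ⟨_, ⟨k, rfl⟩, hk⟩

theorem stmt_2 (p d : ℕ) (Pa : Fin p → Finset (Fin d))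
    (hPa : ∀ i, (Pa i).Nonempty)
    (hch : ∀ k : Fin d, {i : Fin p | k ∈ Pa i}.Nonempty)
    (G : SimpleGraph (Fin p))
    (hG : ∀ i j : Fin p, G.Adj i j ↔ i ≠ j ∧ (Pa i ∩ Pa j).Nonempty)
    (hucc : ∀ k : Fin d,
      ({i : Fin p | k ∈ Pa i} \ ⋃ j ∈ {j : Fin d | j ≠ k}, {i : Fin p | j ∈ Pa i}).Nonempty) :
    {S : Set (Fin p) | ∃ k : Fin d, S = {i : Fin p | k ∈ Pa i}} =
      {S : Set (Fin p) | IsIndepMaxClique G S} :=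
  stmt_2_general p d Pa hPa G hG hucc
end

section
/- Let Λ ∈ ℝ^{p×d} satisfy the unique child condition: for each column k there is a row i with Λ_{ik} ≠ 0 and Λ_{ij} = 0 for all j ≠ k. Then (1) every column of Λ has at least d−1 zeros, and (2) for each j ∈ [d], the submatrix Λ^{[j]} obtained by deleting column j and keeping only the rows with a zero in column j has rank d−1. -/
/-!
The unique-child rows `r k` of the columns are pairwise distinct, and for `k ≠ j` the row `r k`
vanishes in column `j`; this gives the `d - 1` zeros of column `j`. Moreover these rows lie in
`Λ^{[j]}` and form a square diagonal submatrix of it with nonzero diagonal, so `Λ^{[j]}`, which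
has `d - 1` columns, has full column rank.
-/

namespace Matrix

variable {m n R : Type*}

def IsUniqueChildRow [Zero R] (A : Matrix m n R) (i : m) (k : n) : Prop :=
  A i k ≠ 0 ∧ ∀ j, j ≠ k → A i j = 0

theorem IsUniqueChildRow.col_eq [Zero R] {A : Matrix m n R} {i : m} {k k' : n}
    (h : A.IsUniqueChildRow i k) (h' : A.IsUniqueChildRow i k') : k = k' := by
  by_contra hne
  exact h.1 (h'.2 k hne)

theorem rank_eq_card_width_of_diagonal_rows [Fintype n] [DecidableEq n] [Field R]
    (A : Matrix m n R) (g : n → m) (hdiag : ∀ k k', k ≠ k' → A (g k) k' = 0)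
    (hne : ∀ k, A (g k) k ≠ 0) : A.rank = Fintype.card n := by
  refine le_antisymm A.rank_le_card_width ?_
  have hsub : A.submatrix g id = diagonal fun k => A (g k) k := by
    ext k k'
    by_cases h : k = k'
    · subst h; simp
    · simp [h, hdiag k k' h]
  have hunit : IsUnit (A.submatrix g id) := by
    rw [isUnit_iff_isUnit_det, hsub, det_diagonal]
    exact isUnit_iff_ne_zero.mpr (Finset.prod_ne_zero_iff.mpr fun k _ => hne k)
  calc Fintype.card n = (A.submatrix g id).rank := (rank_of_isUnit _ hunit).symm
    _ ≤ A.rank := rank_submatrix_le _ _ _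

theorem card_sub_one_le_card_zeros_of_isUniqueChildRow [Fintype m] [Fintype n] [DecidableEq n]
    [Zero R] [DecidableEq R] {A : Matrix m n R} {r : n → m}
    (hr : ∀ k, A.IsUniqueChildRow (r k) k) (j : n) :
    Fintype.card n - 1 ≤ (Finset.univ.filter fun i => A i j = 0).card := by
  have hinj : Function.Injective r := fun k k' h => (hr k).col_eq (h ▸ hr k')
  rw [← Finset.card_univ, ← Finset.card_erase_of_mem (Finset.mem_univ j)]
  refine Finset.card_le_card_of_injOn r (fun k hk => ?_) hinj.injOn
  exact Finset.mem_filter.mpr ⟨Finset.mem_univ _, (hr k).2 j (Finset.ne_of_mem_erase hk).symm⟩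

theorem rank_submatrix_zeros_of_isUniqueChildRow [Fintype n] [DecidableEq n] [Field R]
    {A : Matrix m n R} {r : n → m} (hr : ∀ k, A.IsUniqueChildRow (r k) k) (j : n) :
    (A.submatrix (fun i : {i // A i j = 0} => (i : m)) (fun k : {k // k ≠ j} => (k : n))).rank =
      Fintype.card n - 1 := by
  rw [rank_eq_card_width_of_diagonal_rows (A.submatrix (fun i : {i // A i j = 0} => (i : m))
      (fun k : {k // k ≠ j} => (k : n))) (fun k => ⟨r k, (hr k).2 j (Ne.symm k.2)⟩)
      (fun k k' h => (hr k).2 k' fun hc => h (Subtype.ext hc.symm)) (fun k => (hr k).1)]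
  simp [Fintype.card_subtype_compl]

end Matrix

theorem stmt_6_general (p d : ℕ)
    (Λ : Matrix (Fin p) (Fin d) ℝ)
    (hucc : ∀ k : Fin d, ∃ i : Fin p, Λ i k ≠ 0 ∧ ∀ j : Fin d, j ≠ k → Λ i j = 0) :
    (∀ k : Fin d, d - 1 ≤ (Finset.univ.filter (fun i : Fin p => Λ i k = 0)).card) ∧
    (∀ j : Fin d,
      (Λ.submatrix (fun i : {i : Fin p // Λ i j = 0} => (i : Fin p))
        (fun k : {k : Fin d // k ≠ j} => (k : Fin d))).rank = d - 1) := by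
  choose r hr using hucc
  refine ⟨fun k => ?_, fun j => ?_⟩
  · simpa using Matrix.card_sub_one_le_card_zeros_of_isUniqueChildRow hr k
  · simpa using Matrix.rank_submatrix_zeros_of_isUniqueChildRow hr j

theorem stmt_6 (p d : ℕ) (hd : 1 ≤ d) (hdp : d ≤ p)
    (Λ : Matrix (Fin p) (Fin d) ℝ)
    (hucc : ∀ k : Fin d, ∃ i : Fin p, Λ i k ≠ 0 ∧ ∀ j : Fin d, j ≠ k → Λ i j = 0) :
    (∀ k : Fin d, d - 1 ≤ (Finset.univ.filter (fun i : Fin p => Λ i k = 0)).card) ∧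
    (∀ j : Fin d,
      (Λ.submatrix (fun i : {i : Fin p // Λ i j = 0} => (i : Fin p))
        (fun k : {k : Fin d // k ≠ j} => (k : Fin d))).rank = d - 1) :=
  stmt_6_general p d Λ hucc
end

section
/- Let Λ ∈ ℝ^{p×d} satisfy the unique child condition, and let M ∈ ℝ^{d×d} be invertible with supp(ΛM) ⊆ supp(Λ). Then M is a generalized permutation-free diagonal-pattern matrix in the following sense: M is a diagonal matrix (possibly with nonzero diagonal entries of arbitrary sign). -/
open Matrix

namespace Matrix

variable {m n α : Type*} [Fintype n]

theorem mul_apply_of_row_eq_zero_of_ne [NonUnitalNonAssocSemiring α] {A : Matrix m n α}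
    (B : Matrix n n α) {r : m} {k : n} (hrow : ∀ j, j ≠ k → A r j = 0) (j : n) :
    (A * B) r j = A r k * B k j :=
  Finset.sum_eq_single k (fun b _ hb => by simp only [hrow b hb, zero_mul])
    (fun hk => absurd (Finset.mem_univ k) hk)

theorem isDiag_of_support_mul_subset [NonUnitalNonAssocSemiring α] [NoZeroDivisors α]
    {A : Matrix m n α} (hchild : ∀ k, ∃ r, A r k ≠ 0 ∧ ∀ j, j ≠ k → A r j = 0)
    {B : Matrix n n α} (hsupp : ∀ r j, (A * B) r j ≠ 0 → A r j ≠ 0) :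
    B.IsDiag := by
  intro k j hkj
  obtain ⟨r, hr, hrow⟩ := hchild k
  by_contra hB
  have hAB : (A * B) r j ≠ 0 := by
    rw [mul_apply_of_row_eq_zero_of_ne B hrow j]
    exact mul_ne_zero hr hB
  exact hsupp r j hAB (hrow j hkj.symm)

end Matrix

theorem stmt_8_general (p d : ℕ)
    (Λ : Matrix (Fin p) (Fin d) ℝ)
    (hucc : ∀ k : Fin d, ∃ i : Fin p, Λ i k ≠ 0 ∧ ∀ j : Fin d, j ≠ k → Λ i j = 0)
    (M : Matrix (Fin d) (Fin d) ℝ)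
    (hsupp : {ij : Fin p × Fin d | (Λ * M) ij.1 ij.2 ≠ 0} ⊆
      {ij : Fin p × Fin d | Λ ij.1 ij.2 ≠ 0}) :
    M.IsDiag :=
  isDiag_of_support_mul_subset hucc fun r j h => hsupp (show (r, j) ∈ _ from h)

theorem stmt_8 (p d : ℕ)
    (Λ : Matrix (Fin p) (Fin d) ℝ)
    (hucc : ∀ k : Fin d, ∃ i : Fin p, Λ i k ≠ 0 ∧ ∀ j : Fin d, j ≠ k → Λ i j = 0)
    (M : Matrix (Fin d) (Fin d) ℝ) (hM : IsUnit M.det)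
    (hsupp : {ij : Fin p × Fin d | (Λ * M) ij.1 ij.2 ≠ 0} ⊆
      {ij : Fin p × Fin d | Λ ij.1 ij.2 ≠ 0}) :
    M.IsDiag :=
  stmt_8_general p d Λ hucc M hsupp
end

section
/- Let Λ ∈ ℝ^{p×d} satisfy the unique child condition and let Φ, Φ' be symmetric positive definite d×d matrices with unit diagonals. Suppose M ∈ ℝ^{d×d} is invertible, supp(ΛM) ⊆ supp(Λ), and M⁻¹Φ M⁻ᵀ = Φ' has unit diagonal. Then M is a signature matrix (diagonal with entries ±1). -/
/-!
Right multiplication by `M` mixes the columns of `Λ`: a row of `Λ` supported only at column `k`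
becomes `Λ i k` times row `k` of `M`. Support preservation therefore forces every row of `M` to
vanish off the diagonal. For diagonal `M` the congruence `Φ = M Φ' Mᵀ` reads
`Φ k k = M k k * Φ' k k * M k k` on the diagonal, and unit diagonals give `M k k ^ 2 = 1`.
-/

open Matrix

namespace Matrix

variable {m n R : Type*} [Fintype n] [NonUnitalNonAssocSemiring R]

lemma mul_apply_of_row_eq_zero_off {Λ : Matrix m n R} {i : m} {k : n}
    (hrow : ∀ j, j ≠ k → Λ i j = 0) (M : Matrix n n R) (j : n) :
    (Λ * M) i j = Λ i k * M k j := by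
  rw [mul_apply, Finset.sum_eq_single k (fun l _ hl => by rw [hrow l hl, zero_mul]) (by simp)]

lemma isDiag_of_support_mul_subset_s9 [NoZeroDivisors R] {Λ : Matrix m n R}
    (hucc : ∀ k, ∃ i, Λ i k ≠ 0 ∧ ∀ j, j ≠ k → Λ i j = 0) {M : Matrix n n R}
    (hsupp : ∀ i j, (Λ * M) i j ≠ 0 → Λ i j ≠ 0) : M.IsDiag := by
  intro k j hkj
  obtain ⟨i, hik, hrow⟩ := hucc k
  by_contra hMkj
  refine hsupp i j ?_ (hrow j (Ne.symm hkj))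
  rw [mul_apply_of_row_eq_zero_off hrow]
  exact mul_ne_zero hik hMkj

lemma IsDiag.mul_mul_transpose_apply_self [DecidableEq n] {M : Matrix n n R} (hM : M.IsDiag)
    (A : Matrix n n R) (k : n) : (M * A * Mᵀ) k k = M k k * A k k * M k k := by
  rw [← hM.diagonal_diag, diagonal_transpose, mul_diagonal, diagonal_mul]
  simp

end Matrix

theorem stmt_9_general (p d : ℕ)
    (Λ : Matrix (Fin p) (Fin d) ℝ)
    (hucc : ∀ k : Fin d, ∃ i : Fin p, Λ i k ≠ 0 ∧ ∀ j : Fin d, j ≠ k → Λ i j = 0)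
    (Φ Φ' : Matrix (Fin d) (Fin d) ℝ)
    (hΦdiag : ∀ k, Φ k k = 1) (hΦ'diag : ∀ k, Φ' k k = 1)
    (M : Matrix (Fin d) (Fin d) ℝ) (hM : IsUnit M.det)
    (hsupp : {ij : Fin p × Fin d | (Λ * M) ij.1 ij.2 ≠ 0} ⊆
      {ij : Fin p × Fin d | Λ ij.1 ij.2 ≠ 0})
    (hrot : M⁻¹ * Φ * M⁻¹ᵀ = Φ') :
    M.IsDiag ∧ ∀ k, M k k = 1 ∨ M k k = -1 := by
  have hdiag : M.IsDiag := isDiag_of_support_mul_subset_s9 hucc fun i j h => hsupp (a := (i, j)) h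
  have hcongr : M * Φ' * Mᵀ = Φ := by
    rw [← hrot, ← Matrix.mul_assoc, ← Matrix.mul_assoc, mul_nonsing_inv M hM, Matrix.one_mul,
      Matrix.mul_assoc, ← transpose_mul, mul_nonsing_inv M hM, transpose_one, Matrix.mul_one]
  refine ⟨hdiag, fun k => mul_self_eq_one_iff.mp ?_⟩
  simpa [hΦdiag, hΦ'diag, hcongr] using (hdiag.mul_mul_transpose_apply_self Φ' k).symm

theorem stmt_9 (p d : ℕ)
    (Λ : Matrix (Fin p) (Fin d) ℝ)
    (hucc : ∀ k : Fin d, ∃ i : Fin p, Λ i k ≠ 0 ∧ ∀ j : Fin d, j ≠ k → Λ i j = 0)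
    (Φ Φ' : Matrix (Fin d) (Fin d) ℝ)
    (hΦ : Φ.PosDef) (hΦ' : Φ'.PosDef)
    (hΦdiag : ∀ k, Φ k k = 1) (hΦ'diag : ∀ k, Φ' k k = 1)
    (M : Matrix (Fin d) (Fin d) ℝ) (hM : IsUnit M.det)
    (hsupp : {ij : Fin p × Fin d | (Λ * M) ij.1 ij.2 ≠ 0} ⊆
      {ij : Fin p × Fin d | Λ ij.1 ij.2 ≠ 0})
    (hrot : M⁻¹ * Φ * M⁻¹ᵀ = Φ') :
    M.IsDiag ∧ ∀ k, M k k = 1 ∨ M k k = -1 :=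
  stmt_9_general p d Λ hucc Φ Φ' hΦdiag hΦ'diag M hM hsupp hrot
end
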